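/- Let l ≥ 1 be an integer and let S be a separating union-closed family of subsets of an n-element set Ω. Then the l-fold weight satisfies w_l(S) = ∑_{A ∈ S} C(|A|, l) ≥ C(n, l+1). -/

import Mathlib

/-!
For `j ∈ Ω` let `M j` be the union of all members of `S` avoiding `j`; by union-closedness it is
the largest member of `S` avoiding `j`, and separation makes `j ↦ M j` injective. Given an
`(l+1)`-subset `T` of `Ω`, let `j ∈ T` lie in the fewest members of `S`. Every other `i ∈ T` then
lies in some member avoiding `j` (otherwise `i` would lie in strictly fewer members than `j`),
so `T \ {j}` is an `l`-subset of `M j`. The map `T ↦ (M j, T \ {j})` is injective into the pairs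
`(A, U)` with `A ∈ S` and `U` an `l`-subset of `A`, of which there are `w_l(S)`.
-/

open Finset

def Separates {α : Type*} (S : Finset (Finset α)) (i j : α) : Prop :=
  ∃ A ∈ S, (i ∈ A ∧ j ∉ A) ∨ (j ∈ A ∧ i ∉ A)

section

variable {α : Type*} [DecidableEq α]

theorem choose_succ_le_sum_choose_of_erase_subset {Ω : Finset α} {S : Finset (Finset α)} {l : ℕ}
    (M : α → Finset α) (hM : Set.InjOn M Ω)
    (h : ∀ T ∈ Ω.powersetCard (l + 1), ∃ j ∈ T, M j ∈ S ∧ T.erase j ⊆ M j) :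
    (#Ω).choose (l + 1) ≤ ∑ A ∈ S, (#A).choose l := by
  calc (#Ω).choose (l + 1) = #(Ω.powersetCard (l + 1)) := (card_powersetCard _ _).symm
    _ ≤ #(S.sigma fun A => A.powersetCard l) := by
      refine card_le_card_of_forall_subsingleton
        (fun T (p : Σ _ : Finset α, Finset α) => ∃ j ∈ T, p = ⟨M j, T.erase j⟩) ?_ ?_
      · intro T hT
        obtain ⟨j, hjT, hMj, hsub⟩ := h T hT
        have hcard : #(T.erase j) = l := by
          rw [card_erase_of_mem hjT, (mem_powersetCard.mp hT).2, Nat.add_sub_cancel]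
        exact ⟨_, mem_sigma.mpr ⟨hMj, mem_powersetCard.mpr ⟨hsub, hcard⟩⟩, j, hjT, rfl⟩
      · rintro p - T₁ ⟨hT₁, j₁, hj₁, rfl⟩ T₂ ⟨hT₂, j₂, hj₂, heq⟩
        obtain ⟨hM_eq, herase⟩ := Sigma.mk.inj_iff.mp heq
        obtain rfl : j₁ = j₂ :=
          hM ((mem_powersetCard.mp hT₁).1 hj₁) ((mem_powersetCard.mp hT₂).1 hj₂) hM_eq
        rw [← insert_erase hj₁, ← insert_erase hj₂, eq_of_heq herase]
    _ = ∑ A ∈ S, (#A).choose l := by simp only [card_sigma, card_powersetCard]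

def maxAvoiding (S : Finset (Finset α)) (j : α) : Finset α :=
  {A ∈ S | j ∉ A}.sup id

variable {S : Finset (Finset α)} {A : Finset α} {i j : α}

theorem notMem_maxAvoiding : j ∉ maxAvoiding S j := by
  simp [maxAvoiding, mem_sup]

theorem subset_maxAvoiding (hA : A ∈ S) (hjA : j ∉ A) : A ⊆ maxAvoiding S j :=
  le_sup (f := id) (mem_filter.mpr ⟨hA, hjA⟩)

theorem maxAvoiding_mem (huc : ∀ A ∈ S, ∀ B ∈ S, A ∪ B ∈ S) (hA : A ∈ S) (hjA : j ∉ A) :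
    maxAvoiding S j ∈ S := by
  have hne : {A ∈ S | j ∉ A}.Nonempty := ⟨A, mem_filter.mpr ⟨hA, hjA⟩⟩
  rw [maxAvoiding, ← sup'_eq_sup hne]
  exact sup'_mem (S : Set (Finset α)) (fun B hB C hC => huc B hB C hC) _ hne id
    fun B hB => (mem_filter.mp hB).1

theorem maxAvoiding_ne (hA : A ∈ S) (hiA : i ∈ A) (hjA : j ∉ A) :
    maxAvoiding S i ≠ maxAvoiding S j := fun h =>
  notMem_maxAvoiding (h ▸ subset_maxAvoiding hA hjA hiA)

theorem maxAvoiding_injOn {Ω : Finset α} (hsep : ∀ i ∈ Ω, ∀ j ∈ Ω, i ≠ j → Separates S i j) :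
    Set.InjOn (maxAvoiding S) Ω := by
  intro i hi j hj hij
  by_contra hne
  obtain ⟨A, hA, ⟨hiA, hjA⟩ | ⟨hjA, hiA⟩⟩ := hsep i hi j hj hne
  · exact maxAvoiding_ne hA hiA hjA hij
  · exact maxAvoiding_ne hA hjA hiA hij.symm

-- Otherwise the members containing `i` would form a proper subfamily of those containing `j`.
theorem exists_mem_notMem_of_card_filter_le (hsep : Separates S i j)
    (hle : #{A ∈ S | j ∈ A} ≤ #{A ∈ S | i ∈ A}) : ∃ A ∈ S, i ∈ A ∧ j ∉ A := by
  by_contra! himp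
  obtain ⟨A, hA, ⟨hiA, hjA⟩ | ⟨hjA, hiA⟩⟩ := hsep
  · exact hjA (himp A hA hiA)
  · have hsub : {A ∈ S | i ∈ A} ⊆ {A ∈ S | j ∈ A} := fun B hB => by
      rw [mem_filter] at hB ⊢
      exact ⟨hB.1, himp B hB.1 hB.2⟩
    have hssub : {A ∈ S | i ∈ A} ⊂ {A ∈ S | j ∈ A} :=
      (ssubset_iff_of_subset hsub).mpr
        ⟨A, mem_filter.mpr ⟨hA, hjA⟩, fun h => hiA (mem_filter.mp h).2⟩
    exact (card_lt_card hssub).not_ge hle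

theorem exists_erase_subset_maxAvoiding (huc : ∀ A ∈ S, ∀ B ∈ S, A ∪ B ∈ S) {Ω T : Finset α}
    (hsep : ∀ i ∈ Ω, ∀ j ∈ Ω, i ≠ j → Separates S i j) (hTΩ : T ⊆ Ω) (hT : 2 ≤ #T) :
    ∃ j ∈ T, maxAvoiding S j ∈ S ∧ T.erase j ⊆ maxAvoiding S j := by
  obtain ⟨j, hjT, hjmin⟩ := exists_min_image T (fun j => #{A ∈ S | j ∈ A}) (card_pos.mp (by omega))
  have hsepj : ∀ i ∈ T.erase j, ∃ A ∈ S, i ∈ A ∧ j ∉ A := fun i hi =>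
    exists_mem_notMem_of_card_filter_le
      (hsep i (hTΩ (mem_of_mem_erase hi)) j (hTΩ hjT) (ne_of_mem_erase hi))
      (hjmin i (mem_of_mem_erase hi))
  obtain ⟨i, hi⟩ : (T.erase j).Nonempty := card_pos.mp (by rw [card_erase_of_mem hjT]; omega)
  obtain ⟨A, hA, -, hjA⟩ := hsepj i hi
  refine ⟨j, hjT, maxAvoiding_mem huc hA hjA, fun i hi => ?_⟩
  obtain ⟨B, hB, hiB, hjB⟩ := hsepj i hi
  exact subset_maxAvoiding hB hjB hiB
end

theorem separating_unionClosed_lfold_weight_bound_general {α : Type*} [DecidableEq α]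
    (l : ℕ) (hl : 1 ≤ l) (Ω : Finset α) (n : ℕ) (hn : Ω.card = n)
    (S : Finset (Finset α))
    (huc : ∀ A ∈ S, ∀ B ∈ S, A ∪ B ∈ S)
    (hsep : ∀ i ∈ Ω, ∀ j ∈ Ω, i ≠ j →
      ∃ A ∈ S, (i ∈ A ∧ j ∉ A) ∨ (j ∈ A ∧ i ∉ A)) :
    n.choose (l + 1) ≤ ∑ A ∈ S, A.card.choose l := by
  subst hn
  refine choose_succ_le_sum_choose_of_erase_subset (maxAvoiding S) (maxAvoiding_injOn hsep) ?_
  intro T hT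
  obtain ⟨hTΩ, hTcard⟩ := mem_powersetCard.mp hT
  exact exists_erase_subset_maxAvoiding huc hsep hTΩ (by omega)

/-- `l`-fold weight lower bound from separation: a separating union-closed
family `S` of subsets of an `n`-element set satisfies
`∑_{A ∈ S} C(|A|, l) ≥ C(n, l+1)`. -/
theorem separating_unionClosed_lfold_weight_bound {α : Type*} [DecidableEq α]
    (l : ℕ) (hl : 1 ≤ l) (Ω : Finset α) (n : ℕ) (hn : Ω.card = n)
    (S : Finset (Finset α))
    (hsub : ∀ A ∈ S, A ⊆ Ω)
    (huc : ∀ A ∈ S, ∀ B ∈ S, A ∪ B ∈ S)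
    (hsep : ∀ i ∈ Ω, ∀ j ∈ Ω, i ≠ j →
      ∃ A ∈ S, (i ∈ A ∧ j ∉ A) ∨ (j ∈ A ∧ i ∉ A)) :
    n.choose (l + 1) ≤ ∑ A ∈ S, A.card.choose l :=
  separating_unionClosed_lfold_weight_bound_general l hl Ω n hn S huc hsep
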